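/- arXiv:2003.03532 — 3 statements merged into one kernel-verified Lean document; each statement's English description precedes it below -/
import Mathlib

section
/- Suppose conditions (X) and (Z) hold and that M is invertible. Then the residual propagates according to the exact identity r_{k+1} = (1−α)·( I_m − A·M^{-1}·Aᵀ )·r_k − ε·(1−α)·A·M^{-1}·( ω₁·f'(x_k) + (1−ω₁)·f'(x_{k+1}) + Aᵀ·g'(z_k) ) + ε·( g'(z_{k+1}) − g'(z_k) ). (This is the exact form of the residual-propagation rule r_{k+1} = (1−α)(I − A M^{-1} Aᵀ) r_k + O(ε).) -/
open Matrix MeasureTheory ProbabilityTheory Filter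
open scoped RealInnerProductSpace

/-- Matrix-vector multiplication as a map between Euclidean spaces. -/
noncomputable def mulVecE {m n : ℕ} (A : Matrix (Fin m) (Fin n) ℝ)
    (x : EuclideanSpace ℝ (Fin n)) : EuclideanSpace ℝ (Fin m) := WithLp.toLp 2 (A.mulVec x)

/-- The (Euclidean) operator norm of a matrix. -/
noncomputable def opNorm {m n : ℕ} (B : Matrix (Fin m) (Fin n) ℝ) : ℝ :=
  ‖LinearMap.toContinuousLinearMap (Matrix.toEuclideanLin B)‖


section helpers
variable {m n p : ℕ}

lemma mulVecE_add (A : Matrix (Fin m) (Fin n) ℝ) (x y : EuclideanSpace ℝ (Fin n)) :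
    mulVecE A (x + y) = mulVecE A x + mulVecE A y := congrArg (WithLp.toLp 2) (Matrix.mulVec_add A x y)

lemma mulVecE_sub (A : Matrix (Fin m) (Fin n) ℝ) (x y : EuclideanSpace ℝ (Fin n)) :
    mulVecE A (x - y) = mulVecE A x - mulVecE A y := congrArg (WithLp.toLp 2) (Matrix.mulVec_sub A x y)

lemma mulVecE_smul (A : Matrix (Fin m) (Fin n) ℝ) (r : ℝ) (x : EuclideanSpace ℝ (Fin n)) :
    mulVecE A (r • x) = r • mulVecE A x := congrArg (WithLp.toLp 2) (A.mulVec_smul r x)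

lemma mulVecE_neg (A : Matrix (Fin m) (Fin n) ℝ) (x : EuclideanSpace ℝ (Fin n)) :
    mulVecE A (-x) = -mulVecE A x := by
  simpa using mulVecE_smul A (-1) x

lemma add_mulVecE (A B : Matrix (Fin m) (Fin n) ℝ) (x : EuclideanSpace ℝ (Fin n)) :
    mulVecE (A + B) x = mulVecE A x + mulVecE B x := congrArg (WithLp.toLp 2) (Matrix.add_mulVec A B x)

lemma sub_mulVecE (A B : Matrix (Fin m) (Fin n) ℝ) (x : EuclideanSpace ℝ (Fin n)) :
    mulVecE (A - B) x = mulVecE A x - mulVecE B x := congrArg (WithLp.toLp 2) (Matrix.sub_mulVec A B x)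

lemma smul_mulVecE (r : ℝ) (A : Matrix (Fin m) (Fin n) ℝ) (x : EuclideanSpace ℝ (Fin n)) :
    mulVecE (r • A) x = r • mulVecE A x := congrArg (WithLp.toLp 2) (Matrix.smul_mulVec r A x)

lemma one_mulVecE (x : EuclideanSpace ℝ (Fin n)) :
    mulVecE (1 : Matrix (Fin n) (Fin n) ℝ) x = x := congrArg (WithLp.toLp 2) (Matrix.one_mulVec x)

lemma mul_mulVecE (A : Matrix (Fin m) (Fin n) ℝ) (B : Matrix (Fin n) (Fin p) ℝ)
    (x : EuclideanSpace ℝ (Fin p)) :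
    mulVecE (A * B) x = mulVecE A (mulVecE B x) := congrArg (WithLp.toLp 2) (Matrix.mulVec_mulVec x A B).symm

end helpers

/-- exact residual-propagation identity for G-sADMM. -/
theorem gsadmm_residual_propagation
    (d m : ℕ) (A : Matrix (Fin m) (Fin d) ℝ)
    (f : EuclideanSpace ℝ (Fin d) → ℝ)
    (f' : EuclideanSpace ℝ (Fin d) → EuclideanSpace ℝ (Fin d))
    (hf : ∀ x, HasGradientAt f (f' x) x)
    (g : EuclideanSpace ℝ (Fin m) → ℝ)
    (g' : EuclideanSpace ℝ (Fin m) → EuclideanSpace ℝ (Fin m))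
    (hg : ∀ z, HasGradientAt g (g' z) z)
    (ε α ω₁ ω c : ℝ) (hε : 0 < ε) (hα : α ∈ Set.Ioo (0 : ℝ) 2)
    (hω₁ : ω₁ ∈ Set.Icc (0 : ℝ) 1) (hω : ω ∈ Set.Icc (0 : ℝ) 1) (hc : 0 ≤ c)
    (M : Matrix (Fin d) (Fin d) ℝ)
    (hM : M = c • (1 : Matrix (Fin d) (Fin d) ℝ) + (1 - ω) • (Aᵀ * A))
    (hMinv : IsUnit M)
    (xk xk1 : EuclideanSpace ℝ (Fin d)) (zk zk1 : EuclideanSpace ℝ (Fin m))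
    (hX : (ω₁ * ε) • f' xk + ((1 - ω₁) * ε) • f' xk1 + ε • mulVecE Aᵀ (g' zk)
        + mulVecE Aᵀ (ω • mulVecE A xk + (1 - ω) • mulVecE A xk1 - zk)
        + c • (xk1 - xk) = 0)
    (hZ : ε • (g' zk1 - g' zk) = α • mulVecE A xk1 + (1 - α) • zk - zk1) :
    mulVecE A xk1 - zk1
      = (1 - α) • mulVecE ((1 : Matrix (Fin m) (Fin m) ℝ) - A * M⁻¹ * Aᵀ)
          (mulVecE A xk - zk)
        - (ε * (1 - α)) • mulVecE (A * M⁻¹)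
            (ω₁ • f' xk + (1 - ω₁) • f' xk1 + mulVecE Aᵀ (g' zk))
        + ε • (g' zk1 - g' zk) := by
  have hdet : IsUnit M.det := (Matrix.isUnit_iff_isUnit_det M).mp hMinv
  have hMM : M⁻¹ * M = 1 := Matrix.nonsing_inv_mul M hdet
  have h1 : mulVecE M (xk1 - xk)
      = -(ε • (ω₁ • f' xk + (1 - ω₁) • f' xk1 + mulVecE Aᵀ (g' zk)))
        - mulVecE Aᵀ (mulVecE A xk - zk) := by
    rw [hM]
    simp only [add_mulVecE, smul_mulVecE, one_mulVecE, mul_mulVecE,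
      mulVecE_add, mulVecE_sub, mulVecE_smul, mulVecE_neg] at hX ⊢
    linear_combination (norm := module) hX
  have h2 := congrArg (mulVecE M⁻¹) h1
  rw [← mul_mulVecE, hMM, one_mulVecE] at h2
  have h3 := congrArg (mulVecE A) h2
  rw [mulVecE_sub] at h3
  have h3' : mulVecE A xk1
      = mulVecE A (mulVecE M⁻¹
          (-(ε • (ω₁ • f' xk + (1 - ω₁) • f' xk1 + mulVecE Aᵀ (g' zk)))
            - mulVecE Aᵀ (mulVecE A xk - zk))) + mulVecE A xk :=
    sub_eq_iff_eq_add.mp h3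
  set Δ : EuclideanSpace ℝ (Fin m) := ε • (g' zk1 - g' zk) with hΔ
  have hz : zk1 = α • mulVecE A xk1 + (1 - α) • zk - Δ := by
    rw [hZ]; abel
  rw [hz, h3']
  simp only [sub_mulVecE, one_mulVecE, mul_mulVecE, mulVecE_add, mulVecE_sub,
    mulVecE_smul, mulVecE_neg]
  module
end

section
/- Suppose α = 1, condition (Z) holds, g' is L-Lipschitz with L > 0, and ε·L ≤ 1/2. Then ‖r_{k+1}‖ ≤ 2·ε·L·( ‖r_k‖ + ‖A‖·‖x_{k+1} − x_k‖ ), where ‖A‖ is the operator norm of A. In particular, for the standard (non-relaxed) scheme, if ‖r_k‖ = O(ε²) and ‖x_{k+1}−x_k‖ = O(ε), then ‖r_{k+1}‖ = O(ε²). -/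
open Matrix MeasureTheory ProbabilityTheory Filter
open scoped RealInnerProductSpace

lemma mulVecE_norm_le {m n : ℕ} (A : Matrix (Fin m) (Fin n) ℝ)
    (x : EuclideanSpace ℝ (Fin n)) : ‖mulVecE A x‖ ≤ opNorm A * ‖x‖ := by
  have h : mulVecE A x = LinearMap.toContinuousLinearMap (Matrix.toEuclideanLin A) x := by
    simp [mulVecE, Matrix.toEuclideanLin_apply]
  rw [h]
  exact (LinearMap.toContinuousLinearMap (Matrix.toEuclideanLin A)).le_opNorm x

/-- for the standard (α = 1) scheme the new residual is bounded
by 2εL times (old residual + ‖A‖·one-step x-difference). -/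
theorem sadmm_residual_second_order_smallness
    (d m : ℕ) (A : Matrix (Fin m) (Fin d) ℝ)
    (g : EuclideanSpace ℝ (Fin m) → ℝ)
    (g' : EuclideanSpace ℝ (Fin m) → EuclideanSpace ℝ (Fin m))
    (hg : ∀ z, HasGradientAt g (g' z) z)
    (ε α L : ℝ) (hε : 0 < ε) (hα : α ∈ Set.Ioo (0 : ℝ) 2) (hα1 : α = 1)
    (hL : 0 < L) (hεL : ε * L ≤ 1 / 2)
    (hLip : ∀ z z' : EuclideanSpace ℝ (Fin m), ‖g' z' - g' z‖ ≤ L * ‖z' - z‖)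
    (xk xk1 : EuclideanSpace ℝ (Fin d)) (zk zk1 : EuclideanSpace ℝ (Fin m))
    (hZ : ε • (g' zk1 - g' zk) = α • mulVecE A xk1 + (1 - α) • zk - zk1) :
    ‖mulVecE A xk1 - zk1‖
      ≤ 2 * ε * L * (‖mulVecE A xk - zk‖ + opNorm A * ‖xk1 - xk‖) := by
  subst hα1
  have hZ' : ε • (g' zk1 - g' zk) = mulVecE A xk1 - zk1 := by
    simpa using hZ
  set r1 := mulVecE A xk1 - zk1 with hr1
  set r0 := mulVecE A xk - zk with hr0
  have hAdiff : mulVecE A xk1 - mulVecE A xk = mulVecE A (xk1 - xk) := by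
    simp only [mulVecE]
    exact congrArg (WithLp.toLp 2) (Matrix.mulVec_sub A xk1 xk).symm
  have hdecomp : zk1 - zk = mulVecE A (xk1 - xk) + r0 - r1 := by
    rw [← hAdiff, hr0, hr1]; abel
  have h1 : ‖r1‖ = ε * ‖g' zk1 - g' zk‖ := by
    rw [← hZ', norm_smul, Real.norm_eq_abs, abs_of_pos hε]
  have h2 : ‖g' zk1 - g' zk‖ ≤ L * ‖zk1 - zk‖ := hLip zk zk1
  have h3 : ‖zk1 - zk‖ ≤ opNorm A * ‖xk1 - xk‖ + ‖r0‖ + ‖r1‖ := by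
    rw [hdecomp]
    calc ‖mulVecE A (xk1 - xk) + r0 - r1‖
        ≤ ‖mulVecE A (xk1 - xk) + r0‖ + ‖r1‖ := norm_sub_le _ _
      _ ≤ ‖mulVecE A (xk1 - xk)‖ + ‖r0‖ + ‖r1‖ := by
          gcongr; exact norm_add_le _ _
      _ ≤ opNorm A * ‖xk1 - xk‖ + ‖r0‖ + ‖r1‖ := by
          gcongr; exact mulVecE_norm_le A _
  have key : ‖r1‖ ≤ ε * L * (opNorm A * ‖xk1 - xk‖ + ‖r0‖ + ‖r1‖) := by
    calc ‖r1‖ = ε * ‖g' zk1 - g' zk‖ := h1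
      _ ≤ ε * (L * ‖zk1 - zk‖) := by gcongr
      _ = ε * L * ‖zk1 - zk‖ := by ring
      _ ≤ ε * L * (opNorm A * ‖xk1 - xk‖ + ‖r0‖ + ‖r1‖) := by
          have : (0:ℝ) ≤ ε * L := by positivity
          exact mul_le_mul_of_nonneg_left h3 this
  have hεL0 : (0:ℝ) ≤ ε * L := by positivity
  nlinarith [norm_nonneg r1, norm_nonneg r0, norm_nonneg (xk1 - xk),
    mul_nonneg (mul_nonneg hεL0 (norm_nonneg (xk1 - xk))) (le_of_lt hL)]
end

section
/- Suppose condition (Z) holds and g' is L-Lipschitz. Then the residual satisfies the exact identity r_{k+1} = ((1−α)/α)·(z_{k+1} − z_k) + (ε/α)·( g'(z_{k+1}) − g'(z_k) ), and consequently ‖ r_{k+1} − (1/α − 1)·(z_{k+1} − z_k) ‖ ≤ (ε/α)·L·‖z_{k+1} − z_k‖; i.e., r_{k+1} = (1/α − 1)·(z_{k+1} − z_k) + O(ε²) whenever ‖z_{k+1}−z_k‖ = O(ε). -/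
open Matrix MeasureTheory ProbabilityTheory Filter
open scoped RealInnerProductSpace

/-- exact expression of the residual via the z-increment and the
gradient increment, with the O(ε²) deviation bound. -/
theorem residual_via_z_increment
    (d m : ℕ) (A : Matrix (Fin m) (Fin d) ℝ)
    (g : EuclideanSpace ℝ (Fin m) → ℝ)
    (g' : EuclideanSpace ℝ (Fin m) → EuclideanSpace ℝ (Fin m))
    (hg : ∀ z, HasGradientAt g (g' z) z)
    (ε α L : ℝ) (hε : 0 < ε) (hα : α ∈ Set.Ioo (0 : ℝ) 2) (hL : 0 ≤ L)
    (hLip : ∀ z z' : EuclideanSpace ℝ (Fin m), ‖g' z' - g' z‖ ≤ L * ‖z' - z‖)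
    (xk xk1 : EuclideanSpace ℝ (Fin d)) (zk zk1 : EuclideanSpace ℝ (Fin m))
    (hZ : ε • (g' zk1 - g' zk) = α • mulVecE A xk1 + (1 - α) • zk - zk1) :
    (mulVecE A xk1 - zk1
        = ((1 - α) / α) • (zk1 - zk) + (ε / α) • (g' zk1 - g' zk))
    ∧ ‖(mulVecE A xk1 - zk1) - (1 / α - 1) • (zk1 - zk)‖
        ≤ (ε / α) * L * ‖zk1 - zk‖ := by
  obtain ⟨hα0, hα2⟩ := hα
  have hαne : α ≠ 0 := ne_of_gt hα0
  have key : mulVecE A xk1 - zk1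
      = ((1 - α) / α) • (zk1 - zk) + (ε / α) • (g' zk1 - g' zk) := by
    have h : α • (mulVecE A xk1 - zk1)
        = (1 - α) • (zk1 - zk) + ε • (g' zk1 - g' zk) := by
      rw [hZ]
      module
    have := congrArg (fun v => (α⁻¹ : ℝ) • v) h
    simpa [smul_smul, inv_mul_cancel₀ hαne, div_eq_inv_mul, mul_comm] using this
  refine ⟨key, ?_⟩
  have h2 : (mulVecE A xk1 - zk1) - (1 / α - 1) • (zk1 - zk)
      = (ε / α) • (g' zk1 - g' zk) := by
    rw [key]
    have : (1 / α - 1 : ℝ) = (1 - α) / α := by field_simp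
    rw [this]; abel
  rw [h2, norm_smul]
  have hεα : 0 ≤ ε / α := le_of_lt (div_pos hε hα0)
  calc ‖(ε / α : ℝ)‖ * ‖g' zk1 - g' zk‖
      = (ε / α) * ‖g' zk1 - g' zk‖ := by rw [Real.norm_of_nonneg hεα]
    _ ≤ (ε / α) * (L * ‖zk1 - zk‖) := by
        exact mul_le_mul_of_nonneg_left (hLip zk zk1) hεα
    _ = (ε / α) * L * ‖zk1 - zk‖ := by ring
end
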